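/- arXiv:2104.07727 — 3 statements merged into one kernel-verified Lean document; each statement's English description precedes it below -/
import Mathlib

section
/- Let k ≥ 2 be an integer and let π be the PageRank vector of Γ(k) for α = 1 − 1/k. Then for every i with 1 ≤ i ≤ k, π_{Bi} > ((1 − 1/k)/3)^i · π_{C2}. -/
/-- Arc relation of the graph `Γ(k)` on vertex indices `0, ..., k+2`, where
vertex `0` is `C1`, vertex `1` is `C2`, vertex `i+1` is `B_i` for `1 ≤ i ≤ k`,
and vertex `k+2` is `A`.  `PRadj k j i` holds iff there is an arc from `j` to `i`. -/
def PRadj (k j i : ℕ) : Prop :=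
  (j = 0 ∧ (i = 0 ∨ i = 1)) ∨
  (j = 1 ∧ (i = 0 ∨ i = 1 ∨ i = 2)) ∨
  (2 ≤ j ∧ j ≤ k + 1 ∧ (i = 0 ∨ i = 1 ∨ i = j + 1)) ∨
  (j = k + 2 ∧ i = k + 2)

instance (k j i : ℕ) : Decidable (PRadj k j i) := by unfold PRadj; infer_instance

/-- Out-degree of vertex `j` in `Γ(k)`:  `deg(C1) = 2`, `deg(A) = 1`, all others `3`. -/
def PRdeg (k j : ℕ) : ℕ := if j = 0 then 2 else if j = k + 2 then 1 else 3

/-- The PageRank matrix `R_α` of `Γ(k)`:  entry `(i, j)` is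
`α / deg(j) + (1 - α)/(k+3)` if there is an arc from `j` to `i`, and `(1 - α)/(k+3)`
otherwise. -/
noncomputable def PRmat (k : ℕ) (α : ℝ) : Matrix (Fin (k + 3)) (Fin (k + 3)) ℝ :=
  fun i j =>
    if PRadj k j.1 i.1 then α / (PRdeg k j.1 : ℝ) + (1 - α) / ((k : ℝ) + 3)
    else (1 - α) / ((k : ℝ) + 3)

/-- `π` is a PageRank vector of `Γ(k)` for jumping parameter `α`:  it has nonnegative
entries summing to `1` and satisfies `R_α π = π`. -/
def IsPageRank (k : ℕ) (α : ℝ) (π : Fin (k + 3) → ℝ) : Prop :=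
  (∀ v, 0 ≤ π v) ∧ (∑ v, π v = 1) ∧ (PRmat k α).mulVec π = π

/-!
Each vertex `Bᵢ` has a single in-neighbour (`C2` for `i = 1`, otherwise `Bᵢ₋₁`), of out-degree
3, so the PageRank equation at `Bᵢ` reads `π_{Bᵢ} = (α/3) π_{Bᵢ₋₁} + (1 - α)/n`. For `α < 1`
the teleportation term is positive, and iterating the resulting strict inequality
`π_{Bᵢ} > (α/3) π_{Bᵢ₋₁}` from `B₀ = C2` gives the bound.
-/

open Finset Matrix

lemma pow_mul_lt_of_mul_lt_succ {x : ℕ → ℝ} {c : ℝ} {n : ℕ} (hc : 0 ≤ c)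
    (h : ∀ i, 1 ≤ i → i ≤ n → c * x i < x (i + 1)) :
    ∀ i, 1 ≤ i → i ≤ n → c ^ i * x 1 < x (i + 1) := by
  intro i hi hin
  induction i, hi using Nat.le_induction with
  | base => simpa using h 1 le_rfl hin
  | succ i hi ih =>
    calc c ^ (i + 1) * x 1 = c * (c ^ i * x 1) := by ring
      _ ≤ c * x (i + 1) := mul_le_mul_of_nonneg_left (ih (by omega)).le hc
      _ < x (i + 1 + 1) := h (i + 1) (by omega) hin

lemma PRmat_mulVec_apply (k : ℕ) (α : ℝ) (π : Fin (k + 3) → ℝ) (i : Fin (k + 3)) :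
    (PRmat k α *ᵥ π) i =
      α * ∑ j with PRadj k j.1 i.1, π j / PRdeg k j.1 + (1 - α) / (k + 3) * ∑ j, π j := by
  simp only [mulVec, dotProduct, PRmat, ite_mul, add_mul, sum_filter, mul_sum, ← sum_add_distrib]
  refine sum_congr rfl fun j _ => ?_
  split_ifs <;> ring

lemma PRadj_succ_iff {k i j : ℕ} (hi1 : 1 ≤ i) (hik : i ≤ k) : PRadj k j (i + 1) ↔ j = i := by
  unfold PRadj
  omega

lemma PRdeg_eq_three {k j : ℕ} (hj1 : 1 ≤ j) (hjk : j ≤ k + 1) : PRdeg k j = 3 := by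
  unfold PRdeg
  split_ifs <;> omega

section NatIndex

open Fin.NatCast

-- Vertices are addressed through the cast `ℕ → Fin (k + 3)`, so the recurrence along the
-- path `C2 → B₁ → ⋯ → Bₖ` can be iterated over `ℕ` without carrying bound proofs.

lemma IsPageRank.apply_succ {k : ℕ} {α : ℝ} {π : Fin (k + 3) → ℝ} (hπ : IsPageRank k α π)
    {i : ℕ} (hi1 : 1 ≤ i) (hik : i ≤ k) :
    π (i + 1 : ℕ) = α / 3 * π i + (1 - α) / (k + 3) := by
  have hval {m : ℕ} (hm : m ≤ k + 2) : ((m : Fin (k + 3)) : ℕ) = m :=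
    Fin.val_cast_of_lt (by omega)
  have hin : ({j | PRadj k j.1 (i + 1)} : Finset (Fin (k + 3))) = {(i : Fin (k + 3))} := by
    ext j
    simp [PRadj_succ_iff hi1 hik, Fin.ext_iff, hval (m := i) (by omega)]
  rw [← congrFun hπ.2.2, PRmat_mulVec_apply, hval (by omega), hin, hπ.2.1, sum_singleton,
    hval (by omega), PRdeg_eq_three hi1 (by omega)]
  push_cast
  ring

lemma IsPageRank.pow_mul_apply_one_lt {k : ℕ} {α : ℝ} {π : Fin (k + 3) → ℝ} (hπ : IsPageRank k α π)
    (hα0 : 0 ≤ α) (hα1 : α < 1) {i : ℕ} (hi1 : 1 ≤ i) (hik : i ≤ k) :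
    (α / 3) ^ i * π (1 : ℕ) < π (i + 1 : ℕ) := by
  have hjump : 0 < (1 - α) / (k + 3) := div_pos (by linarith) (by positivity)
  refine pow_mul_lt_of_mul_lt_succ (x := fun m : ℕ => π m) (by positivity)
    (fun j hj1 hjk => ?_) i hi1 hik
  rw [hπ.apply_succ hj1 hjk]
  exact lt_add_of_pos_right _ hjump

end NatIndex

/-- For `k ≥ 2` and `α = 1 - 1/k`, the PageRank vector satisfies
`π_{Bi} > ((1 - 1/k)/3)^i · π_{C2}` for all `1 ≤ i ≤ k`. -/
theorem pagerank_Bi_lower_bound (k : ℕ) (π : Fin (k + 3) → ℝ)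
    (hπ : IsPageRank k (1 - 1 / (k : ℝ)) π) :
    ∀ i : ℕ, ∀ _hi1 : 1 ≤ i, ∀ _hik : i ≤ k,
      π ⟨i + 1, by omega⟩ > ((1 - 1 / (k : ℝ)) / 3) ^ i * π ⟨1, by omega⟩ := by
  intro i hi1 hik
  have hk : (1 : ℝ) ≤ k := by exact_mod_cast hi1.trans hik
  have hα0 : 0 ≤ 1 - 1 / (k : ℝ) := sub_nonneg.2 (div_le_one_of_le₀ hk (by positivity))
  have hα1 : 1 - 1 / (k : ℝ) < 1 := sub_lt_self 1 (by positivity)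
  have := hπ.pow_mul_apply_one_lt hα0 hα1 hi1 hik
  rwa [Fin.natCast_eq_mk, Fin.natCast_eq_mk] at this
end

section
/- For each integer k ≥ 2, let π(k) be the PageRank vector of Γ(k) for α = 1 − 1/k. Then the squared Euclidean norm ‖π(k)‖₂² converges to 17/50 as k → ∞. -/
/-!
For `α = 1 - 1/k` put `β = α/3` and let `s = (1 - α)/(k + 3)` be the teleportation mass.
Since `∑ π = 1`, the PageRank equations read: `C1` and `C2` have the same in-neighbours, hence
the same mass `c`; along the path `B1 → ⋯ → Bk` the mass obeys `x ↦ β x + s`, so it equals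
`(c - e) βⁱ + e` around the fixed point `e`; and the loop at `A` gives `π_A = k (β π_Bk + s)`.
Normalisation then determines `c`. As `k → ∞` we have `β → 1/3` while `e`, `k e` and `k βᵏ` tend
to `0`, so `c → 2/5`, the path contributes `c² ∑ 9⁻ⁱ → c²/8`, `π_A → 0`, and
`‖π‖² → 2 (2/5)² + (2/5)²/8 = 17/50`.
-/

open Filter Topology Finset

section

variable {b : ℕ → ℝ} {L : ℝ}

theorem exists_lt_one_eventually_abs_le (hb : Tendsto b atTop (𝓝 L)) (hL : |L| < 1) :
    ∃ r, 0 ≤ r ∧ r < 1 ∧ ∀ᶠ k in atTop, |b k| ≤ r :=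
  ⟨(|L| + 1) / 2, by positivity, by linarith,
    (hb.abs.eventually (gt_mem_nhds (by linarith))).mono fun _ h => h.le⟩

theorem tendsto_natCast_mul_pow_self_of_tendsto (hb : Tendsto b atTop (𝓝 L)) (hL : |L| < 1) :
    Tendsto (fun k : ℕ => (k : ℝ) * b k ^ k) atTop (𝓝 0) := by
  obtain ⟨r, hr0, hr1, hbr⟩ := exists_lt_one_eventually_abs_le hb hL
  refine squeeze_zero_norm' ?_ (tendsto_self_mul_const_pow_of_lt_one hr0 hr1)
  filter_upwards [hbr] with k hk
  rw [norm_mul, norm_pow, Real.norm_natCast, Real.norm_eq_abs]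
  gcongr

theorem tendsto_pow_self_of_tendsto (hb : Tendsto b atTop (𝓝 L)) (hL : |L| < 1) :
    Tendsto (fun k => b k ^ k) atTop (𝓝 0) := by
  obtain ⟨r, hr0, hr1, hbr⟩ := exists_lt_one_eventually_abs_le hb hL
  refine squeeze_zero_norm' ?_ (tendsto_pow_atTop_nhds_zero_of_lt_one hr0 hr1)
  filter_upwards [hbr] with k hk
  rw [norm_pow, Real.norm_eq_abs]
  gcongr

theorem tendsto_geom_sum_succ_of_tendsto (hb : Tendsto b atTop (𝓝 L)) (hL : |L| < 1) :
    Tendsto (fun k => ∑ i ∈ range k, b k ^ (i + 1)) atTop (𝓝 (L / (1 - L))) := by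
  have hL1 : L - 1 ≠ 0 := by linarith [le_abs_self L]
  have hlim : Tendsto (fun k => b k * (b k ^ k - 1) / (b k - 1)) atTop
      (𝓝 (L * (0 - 1) / (L - 1))) :=
    (hb.mul ((tendsto_pow_self_of_tendsto hb hL).sub_const 1)).div (hb.sub_const 1) hL1
  rw [show L * (0 - 1) / (L - 1) = L / (1 - L) by rw [← neg_sub L 1, div_neg]; ring] at hlim
  refine hlim.congr' ?_
  filter_upwards [hb.eventually_ne (sub_ne_zero.1 hL1)] with k hk
  simp only [pow_succ', ← mul_sum, geom_sum_eq hk, mul_div_assoc]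

end

theorem affine_recurrence_eq {R : Type*} [CommRing R] {x : ℕ → R} {b s e : R} {m : ℕ}
    (he : b * e + s = e) (hx : ∀ i < m, x (i + 1) = b * x i + s) :
    ∀ i ≤ m, x i = (x 0 - e) * b ^ i + e := by
  intro i hi
  induction i with
  | zero => ring
  | succ i ih => rw [hx i (by omega), ih (by omega)]; linear_combination he

def natExtend {n : ℕ} (v : Fin n → ℝ) (m : ℕ) : ℝ := if h : m < n then v ⟨m, h⟩ else 0

theorem natExtend_val {n : ℕ} (v : Fin n → ℝ) (i : Fin n) : natExtend v i = v i :=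
  dif_pos i.2

theorem sum_comp_eq_sum_range_natExtend {n : ℕ} (v : Fin n → ℝ) (g : ℝ → ℝ) :
    ∑ i, g (v i) = ∑ m ∈ range n, g (natExtend v m) := by
  simp only [← Fin.sum_univ_eq_sum_range, natExtend_val]

section

variable {k : ℕ} {α : ℝ} {π : Fin (k + 3) → ℝ}

noncomputable def PRinflow (k : ℕ) (α : ℝ) (p : ℕ → ℝ) (i : ℕ) : ℝ :=
  ∑ j ∈ range (k + 3), (if PRadj k j i then α / PRdeg k j else 0) * p j

theorem IsPageRank.natExtend_eq_PRinflow_add (h : IsPageRank k α π) {i : ℕ} (hi : i < k + 3) :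
    natExtend π i = PRinflow k α (natExtend π) i + (1 - α) / (k + 3) := by
  obtain ⟨-, hsum, hfix⟩ := h
  have hentry : ∀ j, PRmat k α ⟨i, hi⟩ j * π j
      = (if PRadj k j i then α / PRdeg k j else 0) * π j + (1 - α) / (k + 3) * π j := by
    intro j
    unfold PRmat
    split_ifs <;> ring
  calc natExtend π i = (PRmat k α).mulVec π ⟨i, hi⟩ :=
        (dif_pos hi).trans (congrFun hfix _).symm
    _ = _ := by
      rw [Matrix.mulVec, dotProduct, sum_congr rfl fun j _ => hentry j, sum_add_distrib,
        ← mul_sum, hsum, mul_one, PRinflow, ← Fin.sum_univ_eq_sum_range]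
      simp only [natExtend_val]

theorem PRinflow_zero_eq_one (p : ℕ → ℝ) : PRinflow k α p 0 = PRinflow k α p 1 := by
  refine sum_congr rfl fun j _ => ?_
  rw [if_congr (show PRadj k j 0 ↔ PRadj k j 1 by unfold PRadj; omega) rfl rfl]

theorem PRinflow_succ (p : ℕ → ℝ) {i : ℕ} (hi : 1 ≤ i) (hik : i ≤ k) :
    PRinflow k α p (i + 1) = α / 3 * p i := by
  rw [PRinflow, sum_eq_single i]
  · rw [if_pos (by unfold PRadj; omega), PRdeg, if_neg (by omega), if_neg (by omega)]
    norm_num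
  · intro j _ hj
    rw [if_neg (by unfold PRadj; omega), zero_mul]
  · exact fun hi' => absurd (mem_range.2 (by omega)) hi'

theorem PRinflow_top (p : ℕ → ℝ) :
    PRinflow k α p (k + 2) = α / 3 * p (k + 1) + α * p (k + 2) := by
  rw [PRinflow, sum_range_succ, sum_range_succ, sum_eq_zero]
  · rw [if_pos (by unfold PRadj; omega), if_pos (by unfold PRadj; omega), PRdeg, PRdeg,
      if_neg (by omega), if_neg (by omega), if_neg (by omega), if_pos rfl]
    norm_num
  · intro j hj
    rw [mem_range] at hj
    rw [if_neg (by unfold PRadj; omega), zero_mul]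

theorem IsPageRank.natExtend_zero_eq_one (h : IsPageRank k α π) :
    natExtend π 0 = natExtend π 1 := by
  rw [h.natExtend_eq_PRinflow_add (by omega), h.natExtend_eq_PRinflow_add (by omega),
    PRinflow_zero_eq_one]

noncomputable def PRratio (k : ℕ) : ℝ := (1 - 1 / k) / 3

/-- The fixed point `s / (1 - β)` of `x ↦ β x + s` for `β = PRratio k` and `s = 1 / (k (k + 3))`. -/
noncomputable def PRfixedPt (k : ℕ) : ℝ := 3 / ((2 * k + 1) * (k + 3))

theorem PRratio_nonneg (hk : k ≠ 0) : 0 ≤ PRratio k := by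
  have : 1 / (k : ℝ) ≤ 1 :=
    div_le_one_of_le₀ (by exact_mod_cast Nat.one_le_iff_ne_zero.2 hk) k.cast_nonneg
  unfold PRratio
  linarith

theorem PRratio_mul_PRfixedPt_add (hk : k ≠ 0) :
    PRratio k * PRfixedPt k + (1 - (1 - 1 / (k : ℝ))) / (k + 3) = PRfixedPt k := by
  unfold PRratio PRfixedPt
  field_simp
  ring

theorem IsPageRank.natExtend_succ_eq (hk : k ≠ 0) (h : IsPageRank k (1 - 1 / k) π) :
    ∀ i ≤ k,
      natExtend π (i + 1) = (natExtend π 0 - PRfixedPt k) * PRratio k ^ i + PRfixedPt k := by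
  rw [h.natExtend_zero_eq_one]
  refine affine_recurrence_eq (x := fun i => natExtend π (i + 1))
    (PRratio_mul_PRfixedPt_add hk) fun i hi => ?_
  rw [h.natExtend_eq_PRinflow_add (by omega), PRinflow_succ _ (by omega) (by omega), PRratio]

theorem IsPageRank.natExtend_top_eq (hk : k ≠ 0) (h : IsPageRank k (1 - 1 / k) π) :
    natExtend π (k + 2)
      = k * ((natExtend π 0 - PRfixedPt k) * PRratio k ^ (k + 1) + PRfixedPt k) := by
  have htop := h.natExtend_eq_PRinflow_add (i := k + 2) (by omega)
  rw [PRinflow_top, ← PRratio] at htop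
  have hlast := h.natExtend_succ_eq hk k le_rfl
  have hinv : (k : ℝ) * (1 / k) = 1 := mul_one_div_cancel (Nat.cast_ne_zero.2 hk)
  linear_combination (k : ℝ) * htop + k * PRratio k * hlast + k * PRratio_mul_PRfixedPt_add hk
    - natExtend π (k + 2) * hinv

theorem IsPageRank.sum_comp_eq (hk : k ≠ 0) (h : IsPageRank k (1 - 1 / k) π) (g : ℝ → ℝ) :
    ∑ v, g (π v) = 2 * g (natExtend π 0)
      + ∑ i ∈ range k, g ((natExtend π 0 - PRfixedPt k) * PRratio k ^ (i + 1) + PRfixedPt k)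
      + g (k * ((natExtend π 0 - PRfixedPt k) * PRratio k ^ (k + 1) + PRfixedPt k)) := by
  rw [sum_comp_eq_sum_range_natExtend, sum_range_succ, sum_range_succ', sum_range_succ',
    h.natExtend_top_eq hk, ← h.natExtend_zero_eq_one,
    sum_congr rfl fun i hi => by rw [h.natExtend_succ_eq hk (i + 1) (by simpa using hi)]]
  ring

theorem IsPageRank.sum_eq_one (hk : k ≠ 0) (h : IsPageRank k (1 - 1 / k) π) :
    2 * natExtend π 0
      + ((natExtend π 0 - PRfixedPt k) * ∑ i ∈ range k, PRratio k ^ (i + 1) + k * PRfixedPt k)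
      + ((natExtend π 0 - PRfixedPt k) * (k * PRratio k ^ (k + 1)) + k * PRfixedPt k) = 1 := by
  rw [← h.2.1, h.sum_comp_eq hk fun x => x]
  simp only [sum_add_distrib, ← mul_sum, sum_const, card_range, nsmul_eq_mul]
  ring

theorem IsPageRank.sum_sq_eq (hk : k ≠ 0) (h : IsPageRank k (1 - 1 / k) π) :
    ∑ v, π v ^ 2 = 2 * natExtend π 0 ^ 2
      + ((natExtend π 0 - PRfixedPt k) ^ 2 * ∑ i ∈ range k, (PRratio k ^ 2) ^ (i + 1)
        + 2 * (natExtend π 0 - PRfixedPt k) * PRfixedPt k * ∑ i ∈ range k, PRratio k ^ (i + 1)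
        + k * PRfixedPt k * PRfixedPt k)
      + ((natExtend π 0 - PRfixedPt k) * (k * PRratio k ^ (k + 1)) + k * PRfixedPt k) ^ 2 := by
  have hsq (i : ℕ) : (PRratio k ^ (i + 1)) ^ 2 = (PRratio k ^ 2) ^ (i + 1) := pow_right_comm ..
  rw [h.sum_comp_eq hk (· ^ 2)]
  simp only [add_sq, mul_pow, hsq, sum_add_distrib, ← mul_sum, ← sum_mul, sum_const,
    card_range, nsmul_eq_mul]
  ring

end

theorem tendsto_PRratio : Tendsto PRratio atTop (𝓝 (1 / 3)) := by
  have h := ((tendsto_one_div_atTop_nhds_zero_nat (𝕜 := ℝ)).const_sub 1).div_const 3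
  rwa [sub_zero] at h

theorem tendsto_natCast_mul_PRratio_pow :
    Tendsto (fun k : ℕ => (k : ℝ) * PRratio k ^ (k + 1)) atTop (𝓝 0) := by
  have hL : |(1 / 3 : ℝ)| < 1 := by norm_num [abs_of_pos]
  simpa [pow_succ, mul_assoc] using
    (tendsto_natCast_mul_pow_self_of_tendsto tendsto_PRratio hL).mul tendsto_PRratio

theorem tendsto_natCast_mul_PRfixedPt :
    Tendsto (fun k : ℕ => (k : ℝ) * PRfixedPt k) atTop (𝓝 0) := by
  have hbound : ∀ k : ℕ, (k : ℝ) * PRfixedPt k ≤ 3 / (k + 3) := by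
    intro k
    unfold PRfixedPt
    rw [mul_div_assoc', div_le_div_iff₀ (by positivity) (by positivity)]
    nlinarith [k.cast_nonneg (α := ℝ)]
  refine squeeze_zero (fun k => by unfold PRfixedPt; positivity) hbound ?_
  simpa [Function.comp_def] using
    (tendsto_const_div_atTop_nhds_zero_nat (3 : ℝ)).comp (tendsto_add_atTop_nat 3)

theorem tendsto_PRfixedPt : Tendsto PRfixedPt atTop (𝓝 0) := by
  refine (tendsto_natCast_mul_PRfixedPt.div_atTop tendsto_natCast_atTop_atTop).congr' ?_
  filter_upwards [eventually_ne_atTop 0] with k hk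
  field_simp

theorem tendsto_geom_sum_PRratio :
    Tendsto (fun k => ∑ i ∈ range k, PRratio k ^ (i + 1)) atTop (𝓝 (1 / 2)) := by
  have hL : |(1 / 3 : ℝ)| < 1 := by norm_num [abs_of_pos]
  convert tendsto_geom_sum_succ_of_tendsto tendsto_PRratio hL using 2
  norm_num

theorem tendsto_geom_sum_PRratio_sq :
    Tendsto (fun k => ∑ i ∈ range k, (PRratio k ^ 2) ^ (i + 1)) atTop (𝓝 (1 / 8)) := by
  have hL : |(1 / 3 : ℝ) ^ 2| < 1 := by norm_num [abs_of_pos]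
  convert tendsto_geom_sum_succ_of_tendsto (tendsto_PRratio.pow 2) hL using 2
  norm_num

theorem tendsto_natExtend_zero_of_isPageRank {π : ∀ k : ℕ, Fin (k + 3) → ℝ}
    (hπ : ∀ᶠ k in atTop, IsPageRank k (1 - 1 / (k : ℝ)) (π k)) :
    Tendsto (fun k => natExtend (π k) 0) atTop (𝓝 (2 / 5)) := by
  have hnum := ((tendsto_const_nhds (x := (1 : ℝ))).add
    (tendsto_PRfixedPt.mul (tendsto_geom_sum_PRratio.add tendsto_natCast_mul_PRratio_pow))).sub
    (tendsto_natCast_mul_PRfixedPt.const_mul 2)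
  have hden := (tendsto_const_nhds (x := (2 : ℝ))).add
    (tendsto_geom_sum_PRratio.add tendsto_natCast_mul_PRratio_pow)
  have hlim := hnum.div hden (by norm_num)
  rw [show ((1 : ℝ) + 0 * (1 / 2 + 0) - 2 * 0) / (2 + (1 / 2 + 0)) = 2 / 5 by norm_num] at hlim
  refine hlim.congr' ?_
  filter_upwards [hπ, eventually_ne_atTop 0] with k hk hk0
  have hratio := PRratio_nonneg hk0
  have hden_pos : 0 < 2 + (∑ i ∈ range k, PRratio k ^ (i + 1) + k * PRratio k ^ (k + 1)) := by
    have := sum_nonneg fun i (_ : i ∈ range k) => pow_nonneg hratio (i + 1)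
    have := mul_nonneg k.cast_nonneg (pow_nonneg hratio (k + 1))
    linarith
  rw [Pi.div_apply, div_eq_iff hden_pos.ne']
  linear_combination -hk.sum_eq_one hk0

/-- If `π k` is the PageRank vector of `Γ(k)` for `α = 1 - 1/k` (for each `k ≥ 2`),
then `‖π(k)‖₂² → 17/50` as `k → ∞`. -/
theorem pagerank_sq_norm_tendsto (π : ∀ k : ℕ, Fin (k + 3) → ℝ)
    (hπ : ∀ k, 2 ≤ k → IsPageRank k (1 - 1 / (k : ℝ)) (π k)) :
    Filter.Tendsto (fun k : ℕ => ∑ v, π k v ^ 2) Filter.atTop (nhds (17 / 50)) := by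
  have hπ' : ∀ᶠ k in atTop, IsPageRank k (1 - 1 / (k : ℝ)) (π k) :=
    eventually_atTop.2 ⟨2, hπ⟩
  have hc := tendsto_natExtend_zero_of_isPageRank hπ'
  have hd := hc.sub tendsto_PRfixedPt
  have hlim := ((hc.pow 2).const_mul 2).add
    ((((hd.pow 2).mul tendsto_geom_sum_PRratio_sq).add
      (((hd.const_mul 2).mul tendsto_PRfixedPt).mul tendsto_geom_sum_PRratio)).add
      (tendsto_natCast_mul_PRfixedPt.mul tendsto_PRfixedPt)) |>.add
    ((hd.mul tendsto_natCast_mul_PRratio_pow).add tendsto_natCast_mul_PRfixedPt |>.pow 2)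
  rw [show (2 : ℝ) * (2 / 5) ^ 2 + ((2 / 5 - 0) ^ 2 * (1 / 8) + 2 * (2 / 5 - 0) * 0 * (1 / 2)
    + 0 * 0) + ((2 / 5 - 0) * 0 + 0) ^ 2 = 17 / 50 by norm_num] at hlim
  refine hlim.congr' ?_
  filter_upwards [hπ', eventually_ne_atTop 0] with k hk hk0
  exact (hk.sum_sq_eq hk0).symm
end

section
/- For every δ > 0 there exists an integer k ≥ 2 such that, with π(k) the PageRank vector of Γ(k) for α = 1 − 1/k and σ(k) the PageRank vector of Γ(k) for α = 1 (the vector with σ(k)_A = 1 and all other entries 0), the Euclidean norm satisfies ‖σ(k) − π(k)‖₂ ≥ √(67/50) − δ. -/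
open Finset

lemma sq_le_three_pow_succ (n : ℕ) : n ^ 2 ≤ 3 ^ (n + 1) := by
  induction n with
  | zero => norm_num
  | succ n ih =>
    have hn := Nat.lt_pow_self (n := n) (a := 3) (by norm_num)
    have h3 : 3 ^ (n + 1 + 1) = 3 ^ (n + 1) * 3 := pow_succ 3 (n + 1)
    have h3' : 3 ^ (n + 1) = 3 ^ n * 3 := pow_succ 3 n
    nlinarith

lemma sqrt_sub_le_sqrt_sub_sq (x : ℝ) {δ : ℝ} (hδ : 0 ≤ δ) :
    √x - δ ≤ √(x - δ ^ 2) := by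
  rcases le_or_gt (√x) δ with h | h
  · linarith [Real.sqrt_nonneg (x - δ ^ 2)]
  · have hx : 0 ≤ x := Real.sqrt_pos.1 (by linarith) |>.le
    rw [Real.le_sqrt' (by linarith)]
    nlinarith [Real.sq_sqrt hx]

lemma sum_range_succ_eq_sum_range_add_sub {M : Type*} [AddCommGroup M] (n : ℕ) (x : ℕ → M) :
    ∑ i ∈ range n, x (i + 1) = ∑ i ∈ range n, x i + (x n - x 0) := by
  rw [← sum_range_sub, ← sum_add_distrib]
  simp

section AffineRecurrence

variable {β r : ℝ} {x : ℕ → ℝ} {n : ℕ}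

lemma le_div_add_pow_mul_of_affine_rec (hβ : 0 ≤ β) (hr0 : 0 ≤ r) (hr1 : r < 1)
    (hx : ∀ i < n, x (i + 1) = β + r * x i) : x n ≤ β / (1 - r) + r ^ n * x 0 := by
  have hfix : β + r * (β / (1 - r)) = β / (1 - r) := by
    field_simp [(sub_pos.2 hr1).ne']
    ring
  induction n with
  | zero => simpa using div_nonneg hβ (sub_pos.2 hr1).le
  | succ n ih =>
    rw [hx n n.lt_succ_self, pow_succ', mul_assoc, ← hfix, add_assoc, ← mul_add]
    gcongr
    exact ih fun i hi => hx i (hi.trans n.lt_succ_self)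

lemma one_sub_mul_sum_of_affine_rec (hx : ∀ i < n, x (i + 1) = β + r * x i) :
    (1 - r) * ∑ i ∈ range n, x (i + 1) = n * β + r * (x 0 - x n) := by
  have hsum : ∑ i ∈ range n, x (i + 1) = n * β + r * ∑ i ∈ range n, x i := by
    rw [sum_congr rfl fun i hi => hx i (mem_range.1 hi), sum_add_distrib, ← mul_sum]
    simp
  linear_combination hsum - r * sum_range_succ_eq_sum_range_add_sub n x

lemma mul_sub_le_one_sub_mul_sum (hx : ∀ i < n, r * x i ≤ x (i + 1)) :
    r * (x 0 - x n) ≤ (1 - r) * ∑ i ∈ range n, x (i + 1) := by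
  have hsum : r * ∑ i ∈ range n, x i ≤ ∑ i ∈ range n, x (i + 1) := by
    rw [mul_sum]
    exact sum_le_sum fun i hi => hx i (mem_range.1 hi)
  linear_combination hsum + r * sum_range_succ_eq_sum_range_add_sub n x

end AffineRecurrence

section GammaGraph

variable {k : ℕ} {α : ℝ} {π : Fin (k + 3) → ℝ} {p : ℕ → ℝ}

lemma sum_range_add_three (f : ℕ → ℝ) :
    ∑ j ∈ range (k + 3), f j = f 0 + f 1 + ∑ i ∈ range k, f (i + 2) + f (k + 2) := by
  rw [sum_range_succ, sum_range_succ', sum_range_succ']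
  ring

lemma IsPageRank.eq_add_sum_in (hπ : IsPageRank k α π) (hp : ∀ v : Fin (k + 3), p v = π v)
    {i : ℕ} (hi : i < k + 3) :
    p i = (1 - α) / (k + 3) +
      ∑ j ∈ range (k + 3), if PRadj k j i then α / PRdeg k j * p j else 0 := by
  obtain ⟨-, hsum, hfix⟩ := hπ
  have hrow : ∀ j : Fin (k + 3), PRmat k α ⟨i, hi⟩ j * π j =
      (1 - α) / (k + 3) * p j + if PRadj k j i then α / PRdeg k j * p j else 0 := by
    intro j
    rw [hp j, PRmat]
    split_ifs <;> ring
  have hsum' : ∑ j ∈ range (k + 3), p j = 1 := by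
    rw [← Fin.sum_univ_eq_sum_range, ← hsum]
    exact sum_congr rfl fun v _ => hp v
  rw [hp ⟨i, hi⟩, ← congrFun hfix, Matrix.mulVec, dotProduct, sum_congr rfl fun j _ => hrow j,
    sum_add_distrib, ← mul_sum, Fin.sum_univ_eq_sum_range (fun j => p j),
    Fin.sum_univ_eq_sum_range (fun j => if PRadj k j i then α / PRdeg k j * p j else 0), hsum',
    mul_one]

lemma IsPageRank.apply_zero_eq_apply_one (hπ : IsPageRank k α π)
    (hp : ∀ v : Fin (k + 3), p v = π v) : p 0 = p 1 := by
  rw [hπ.eq_add_sum_in hp (by omega : 0 < k + 3), hπ.eq_add_sum_in hp (by omega : 1 < k + 3)]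
  congr 1
  refine sum_congr rfl fun j _ => ?_
  have : PRadj k j 0 ↔ PRadj k j 1 := by unfold PRadj; omega
  simp only [this]

lemma IsPageRank.apply_add_two (hπ : IsPageRank k α π) (hp : ∀ v : Fin (k + 3), p v = π v)
    {i : ℕ} (hi : i < k) : p (i + 2) = (1 - α) / (k + 3) + α / 3 * p (i + 1) := by
  have hin : {j ∈ range (k + 3) | PRadj k j (i + 2)} = {i + 1} := by
    ext j
    simp only [mem_filter, mem_range, mem_singleton]
    unfold PRadj
    omega
  have hdeg : PRdeg k (i + 1) = 3 := by rw [PRdeg, if_neg (by omega), if_neg (by omega)]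
  rw [hπ.eq_add_sum_in hp (by omega), ← sum_filter, hin, sum_singleton, hdeg, Nat.cast_ofNat]

lemma IsPageRank.apply_A (hπ : IsPageRank k α π) (hp : ∀ v : Fin (k + 3), p v = π v) :
    p (k + 2) = (1 - α) / (k + 3) + α / 3 * p (k + 1) + α * p (k + 2) := by
  have hin : {j ∈ range (k + 3) | PRadj k j (k + 2)} = {k + 1, k + 2} := by
    ext j
    simp only [mem_filter, mem_range, mem_insert, mem_singleton]
    unfold PRadj
    omega
  have hdeg : PRdeg k (k + 1) = 3 := by rw [PRdeg, if_neg (by omega), if_neg (by omega)]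
  have hdegA : PRdeg k (k + 2) = 1 := by simp [PRdeg]
  nth_rw 1 [hπ.eq_add_sum_in hp (by omega)]
  rw [← sum_filter, hin, sum_pair (by omega), hdeg, hdegA]
  push_cast
  ring

lemma IsPageRank.sum_eq_one_s15 (hπ : IsPageRank k α π) (hp : ∀ v : Fin (k + 3), p v = π v) :
    p 0 + p 1 + ∑ i ∈ range k, p (i + 2) + p (k + 2) = 1 := by
  rw [← sum_range_add_three, ← Fin.sum_univ_eq_sum_range, ← hπ.2.1]
  exact sum_congr rfl fun v _ => hp v

lemma IsPageRank.apply_nonneg (hπ : IsPageRank k α π) (hp : ∀ v : Fin (k + 3), p v = π v)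
    {i : ℕ} (hi : i < k + 3) : 0 ≤ p i :=
  hp ⟨i, hi⟩ ▸ hπ.1 _

end GammaGraph

lemma pos_and_le_one_of_natCast_mul_eq_one {k : ℕ} {t : ℝ} (h : (k : ℝ) * t = 1) :
    0 < t ∧ t ≤ 1 := by
  have hk : (1 : ℝ) ≤ k := by
    exact_mod_cast Nat.one_le_iff_ne_zero.2 fun hk => by simp [hk] at h
  constructor <;> nlinarith

section Bounds

variable {k : ℕ} {t : ℝ} {π : Fin (k + 3) → ℝ} {p : ℕ → ℝ}

lemma IsPageRank.apply_le_one {α : ℝ} (hπ : IsPageRank k α π)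
    (hp : ∀ v : Fin (k + 3), p v = π v) {i : ℕ} (hi : i < k + 3) : p i ≤ 1 :=
  hp ⟨i, hi⟩ ▸ hπ.2.1 ▸ single_le_sum (fun v _ => hπ.1 v) (mem_univ _)

lemma IsPageRank.apply_A_le (hkt : (k : ℝ) * t = 1) (hπ : IsPageRank k (1 - t) π)
    (hp : ∀ v : Fin (k + 3), p v = π v) : p (k + 2) ≤ 5 / 2 * t := by
  obtain ⟨ht0, ht1⟩ := pos_and_le_one_of_natCast_mul_eq_one hkt
  have hA := hπ.apply_A hp
  set r : ℝ := (1 - t) / 3 with hr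
  set β : ℝ := (1 - (1 - t)) / (k + 3) with hβ
  have hr0 : 0 ≤ r := by rw [hr]; linarith
  have hr1 : r ≤ 1 / 3 := by rw [hr]; linarith
  have hβ0 : 0 ≤ β := by rw [hβ, sub_sub_cancel]; positivity
  have hβt : β ≤ t ^ 2 := by
    rw [hβ, sub_sub_cancel, div_le_iff₀ (by positivity)]; nlinarith
  have hrk : r ^ (k + 1) ≤ t ^ 2 := calc
    r ^ (k + 1) ≤ (1 / 3) ^ (k + 1) := pow_le_pow_left₀ hr0 hr1 _
    _ = (k * t) ^ 2 / 3 ^ (k + 1) := by rw [hkt, one_pow, one_div_pow]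
    _ ≤ t ^ 2 := by
      have hpow : (k : ℝ) ^ 2 ≤ 3 ^ (k + 1) := by exact_mod_cast sq_le_three_pow_succ k
      rw [div_le_iff₀ (by positivity), mul_pow, mul_comm (t ^ 2)]
      exact mul_le_mul_of_nonneg_right hpow (sq_nonneg t)
  have hB : p (k + 1) ≤ β / (1 - r) + r ^ k * p 1 :=
    le_div_add_pow_mul_of_affine_rec (x := fun i => p (i + 1)) hβ0 hr0 (by linarith)
      fun i hi => hπ.apply_add_two hp hi
  have hβr : β / (1 - r) ≤ 3 / 2 * β := by
    rw [div_le_iff₀ (by linarith)]; nlinarith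
  have hrkC : r ^ k * p 1 ≤ r ^ k :=
    mul_le_of_le_one_right (by positivity) (hπ.apply_le_one hp (by omega))
  have htA : t * p (k + 2) ≤ t * (5 / 2 * t) := by
    have := mul_le_mul_of_nonneg_left hB hr0
    rw [pow_succ'] at hrk
    nlinarith
  exact le_of_mul_le_mul_left htA ht0

lemma IsPageRank.apply_one_ge (hkt : (k : ℝ) * t = 1) (hπ : IsPageRank k (1 - t) π)
    (hp : ∀ v : Fin (k + 3), p v = π v) : 2 / 5 - 8 / 5 * t ≤ p 1 := by
  obtain ⟨ht0, ht1⟩ := pos_and_le_one_of_natCast_mul_eq_one hkt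
  have hA := hπ.apply_A_le hkt hp
  have hsum := hπ.sum_eq_one_s15 hp
  have h01 := hπ.apply_zero_eq_apply_one hp
  have hS : (1 - (1 - t) / 3) * ∑ i ∈ range k, p (i + 2) =
      k * ((1 - (1 - t)) / (k + 3)) + (1 - t) / 3 * (p 1 - p (k + 1)) :=
    one_sub_mul_sum_of_affine_rec (x := fun i => p (i + 1)) fun i hi => hπ.apply_add_two hp hi
  have hkβ : k * ((1 - (1 - t)) / (k + 3)) ≤ t := by
    rw [sub_sub_cancel, mul_div_assoc', div_le_iff₀ (by positivity)]; nlinarith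
  have hS0 : 0 ≤ ∑ i ∈ range k, p (i + 2) :=
    sum_nonneg fun i hi => hπ.apply_nonneg hp (by simp at hi; omega)
  have hB0 := hπ.apply_nonneg hp (i := k + 1) (by omega)
  have h1 := hπ.apply_nonneg hp (i := 1) (by omega)
  nlinarith

lemma IsPageRank.sum_sq_B_ge (hkt : (k : ℝ) * t = 1) (hπ : IsPageRank k (1 - t) π)
    (hp : ∀ v : Fin (k + 3), p v = π v) :
    (1 / 8 - 3 * t) * p 1 ^ 2 - 2 * t ^ 2 ≤ ∑ i ∈ range k, p (i + 2) ^ 2 := by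
  obtain ⟨ht0, ht1⟩ := pos_and_le_one_of_natCast_mul_eq_one hkt
  have hA := hπ.apply_A hp
  have hA1 := hπ.apply_le_one hp (i := k + 2) (by omega)
  set r : ℝ := (1 - t) / 3 with hr
  set β : ℝ := (1 - (1 - t)) / (k + 3) with hβ
  have hr0 : 0 ≤ r := by rw [hr]; linarith
  have hβ0 : 0 ≤ β := by rw [hβ, sub_sub_cancel]; positivity
  have hstep : ∀ i < k, r ^ 2 * p (i + 1) ^ 2 ≤ p (i + 2) ^ 2 := fun i hi => by
    rw [← mul_pow, hπ.apply_add_two hp hi]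
    exact pow_le_pow_left₀ (mul_nonneg hr0 (hπ.apply_nonneg hp (by omega)))
      (le_add_of_nonneg_left hβ0) 2
  have hQ : r ^ 2 * (p 1 ^ 2 - p (k + 1) ^ 2) ≤ (1 - r ^ 2) * ∑ i ∈ range k, p (i + 2) ^ 2 :=
    mul_sub_le_one_sub_mul_sum (x := fun i => p (i + 1) ^ 2) hstep
  have hB : r * p (k + 1) ≤ t := by nlinarith
  have hB2 : r ^ 2 * p (k + 1) ^ 2 ≤ t ^ 2 := by
    rw [← mul_pow]
    exact pow_le_pow_left₀ (mul_nonneg hr0 (hπ.apply_nonneg hp (by omega))) hB 2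
  have hρ : r ^ 2 ≤ 1 / 9 := by rw [hr]; nlinarith
  have hρ' : (1 - 2 * t) / 9 ≤ r ^ 2 := by rw [hr]; nlinarith
  have key : (1 - r ^ 2) * ((1 / 8 - 3 * t) * p 1 ^ 2 - 2 * t ^ 2) ≤
      (1 - r ^ 2) * ∑ i ∈ range k, p (i + 2) ^ 2 := by
    nlinarith [sq_nonneg (p 1), mul_nonneg ht0.le (sq_nonneg (p 1))]
  exact le_of_mul_le_mul_left key (by linarith)

end Bounds

lemma IsPageRank.sq_dist_A_ge {k : ℕ} {t : ℝ} {π : Fin (k + 3) → ℝ}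
    (hkt : (k : ℝ) * t = 1) (ht : t ≤ 1 / 10) (hπ : IsPageRank k (1 - t) π) :
    67 / 50 - 10 * t ≤ ∑ v, ((if v.1 = k + 2 then (1 : ℝ) else 0) - π v) ^ 2 := by
  set p : ℕ → ℝ := Function.extend Fin.val π 0
  have hp : ∀ v : Fin (k + 3), p v = π v := Fin.val_injective.extend_apply π 0
  have hnorm : ∑ v, ((if v.1 = k + 2 then (1 : ℝ) else 0) - π v) ^ 2 =
      p 0 ^ 2 + p 1 ^ 2 + ∑ i ∈ range k, p (i + 2) ^ 2 + (1 - p (k + 2)) ^ 2 := by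
    rw [← sum_congr rfl fun v _ =>
        congrArg (fun x => ((if v.1 = k + 2 then (1 : ℝ) else 0) - x) ^ 2) (hp v),
      Fin.sum_univ_eq_sum_range (fun j => ((if j = k + 2 then (1 : ℝ) else 0) - p j) ^ 2),
      sum_range_add_three, if_neg (by omega), if_neg (by omega), if_pos rfl,
      sum_congr rfl fun i hi => by rw [if_neg (by simp at hi; omega)]]
    simp
  obtain ⟨ht0, -⟩ := pos_and_le_one_of_natCast_mul_eq_one hkt
  have hA := hπ.apply_A_le hkt hp
  have hC := hπ.apply_one_ge hkt hp
  have hB := hπ.sum_sq_B_ge hkt hp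
  rw [hnorm, hπ.apply_zero_eq_apply_one hp]
  have hC2 : (2 / 5 - 8 / 5 * t) ^ 2 ≤ p 1 ^ 2 := pow_le_pow_left₀ (by linarith) hC 2
  have hA2 : (1 - 5 / 2 * t) ^ 2 ≤ (1 - p (k + 2)) ^ 2 :=
    pow_le_pow_left₀ (by linarith) (by linarith) 2
  nlinarith [mul_le_mul_of_nonneg_left hC2 (by linarith : (0 : ℝ) ≤ 17 / 8 - 3 * t)]

/-- For every `δ > 0` there is `k ≥ 2` such that the PageRank vectors of `Γ(k)` for
`α = 1 - 1/k` and `α = 1` (the latter being `1` at `A` and `0` elsewhere) satisfy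
`‖σ(k) - π(k)‖₂ ≥ √(67/50) - δ`. -/
theorem pagerank_diff_norm_large (δ : ℝ) (hδ : 0 < δ) :
    ∃ k : ℕ, 2 ≤ k ∧
      ∀ π : Fin (k + 3) → ℝ, IsPageRank k (1 - 1 / (k : ℝ)) π →
        Real.sqrt (∑ v, ((if v.1 = k + 2 then (1 : ℝ) else 0) - π v) ^ 2) ≥
          Real.sqrt (67 / 50) - δ := by
  set k := max 10 ⌈10 / δ ^ 2⌉₊
  have hk : (10 : ℝ) ≤ k := by exact_mod_cast le_max_left _ _
  have hkt : (k : ℝ) * (1 / k) = 1 := mul_one_div_cancel (by positivity)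
  have hδk : 10 * (1 / k : ℝ) ≤ δ ^ 2 := by
    have : 10 / δ ^ 2 ≤ (k : ℝ) := (Nat.le_ceil _).trans (by exact_mod_cast le_max_right _ _)
    rw [mul_one_div, div_le_iff₀ (by positivity)]
    rwa [div_le_iff₀ (by positivity), mul_comm] at this
  refine ⟨k, by omega, fun π hπ => ?_⟩
  have hdist := hπ.sq_dist_A_ge hkt (one_div_le_one_div_of_le (by norm_num) hk)
  calc Real.sqrt (67 / 50) - δ ≤ Real.sqrt (67 / 50 - δ ^ 2) :=
        sqrt_sub_le_sqrt_sub_sq _ hδ.le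
    _ ≤ _ := Real.sqrt_le_sqrt (by linarith)
end
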